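/- arXiv:2512.06501 — 3 statements merged into one kernel-verified Lean document; each statement's English description precedes it below -/
import Mathlib

section
/- (Ward identity for conformal observables) Let [L,H] = -H with H nilpotent, and let O₁, O₂ ∈ End(V) satisfy [L,Oᵢ] = Δᵢ·Oᵢ for scalars Δ₁, Δ₂. Then for all Λ > 0: Tr(e^{-Λ(τ-τ₂₁)H} O₁ e^{-Λτ₂₁H} O₂) = Λ^{Δ₁+Δ₂} · Tr(e^{-(τ-τ₂₁)H} O₁ e^{-τ₂₁H} O₂). -/
open NormedSpace

lemma intertwine_exp {d : ℕ} (A B O : Matrix (Fin d) (Fin d) ℂ) (h : A * O = O * B) :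
    exp A * O = O * exp B := by
  letI : SeminormedRing (Matrix (Fin d) (Fin d) ℂ) := Matrix.linftyOpSemiNormedRing
  letI : NormedRing (Matrix (Fin d) (Fin d) ℂ) := Matrix.linftyOpNormedRing
  letI : NormedAlgebra ℂ (Matrix (Fin d) (Fin d) ℂ) := Matrix.linftyOpNormedAlgebra
  have hpow : ∀ n : ℕ, A ^ n * O = O * B ^ n := by
    intro n
    induction n with
    | zero => simp
    | succ n ih =>
      calc A ^ (n + 1) * O = A ^ n * (A * O) := by rw [pow_succ, mul_assoc]
        _ = A ^ n * O * B := by rw [h, mul_assoc]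
        _ = O * B ^ (n + 1) := by rw [ih, pow_succ, mul_assoc]
  rw [exp_eq_tsum ℂ]
  beta_reduce
  erw [← (expSeries_summable' (𝕂 := ℂ) A).tsum_mul_right,
    ← (expSeries_summable' (𝕂 := ℂ) B).tsum_mul_left]
  congr 1
  funext n
  rw [smul_mul_assoc, mul_smul_comm, hpow]

lemma exp_smul_one_mat {d : ℕ} (c : ℂ) :
    exp (c • (1 : Matrix (Fin d) (Fin d) ℂ)) = Complex.exp c • 1 := by
  letI : SeminormedRing (Matrix (Fin d) (Fin d) ℂ) := Matrix.linftyOpSemiNormedRing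
  letI : NormedRing (Matrix (Fin d) (Fin d) ℂ) := Matrix.linftyOpNormedRing
  letI : NormedAlgebra ℂ (Matrix (Fin d) (Fin d) ℂ) := Matrix.linftyOpNormedAlgebra
  have := (algebraMap_exp_comm (𝔸 := Matrix (Fin d) (Fin d) ℂ) c).symm
  rw [Algebra.algebraMap_eq_smul_one, Algebra.algebraMap_eq_smul_one] at this
  rw [Complex.exp_eq_exp_ℂ]; exact this

lemma key_push {d : ℕ} (L O : Matrix (Fin d) (Fin d) ℂ) (Δ s : ℂ)
    (h : L * O - O * L = Δ • O) :
    exp (s • L) * O = Complex.exp (s * Δ) • (O * exp (s • L)) := by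
  have hL : L * O = Δ • O + O * L := by rw [← h]; abel
  have hc : (s • L) * O = O * (s • L + (s * Δ) • (1 : Matrix (Fin d) (Fin d) ℂ)) := by
    calc (s • L) * O = s • (L * O) := smul_mul_assoc s L O
      _ = s • (Δ • O + O * L) := by rw [hL]
      _ = O * (s • L + (s * Δ) • (1 : Matrix (Fin d) (Fin d) ℂ)) := by
          rw [smul_add, smul_smul, mul_add, mul_smul_comm, mul_smul_comm, mul_one, add_comm]
  rw [intertwine_exp _ _ _ hc]
  have hcomm : Commute (s • L) ((s * Δ) • (1 : Matrix (Fin d) (Fin d) ℂ)) :=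
    ((Commute.one_right (s • L)).smul_right _)
  rw [Matrix.exp_add_of_commute _ _ hcomm, exp_smul_one_mat, mul_smul_comm, mul_smul_comm,
    mul_one]

/-- Ward identity for conformal observables: if `[L,Oᵢ] = Δᵢ Oᵢ`, then rescaling by `Λ > 0`
multiplies the two-point correlator by `Λ^{Δ₁+Δ₂}`. -/
theorem stmt_14 {d : ℕ} (L H O₁ O₂ : Matrix (Fin d) (Fin d) ℂ) (Δ₁ Δ₂ : ℂ)
    (h : L * H - H * L = -H) (hH : IsNilpotent H)
    (h₁ : L * O₁ - O₁ * L = Δ₁ • O₁) (h₂ : L * O₂ - O₂ * L = Δ₂ • O₂)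
    (Λ : ℝ) (hΛ : 0 < Λ) :
    ∀ τ τ₂₁ : ℂ,
      Matrix.trace (exp (-(((Λ : ℂ) * (τ - τ₂₁)) • H)) * O₁ *
          exp (-(((Λ : ℂ) * τ₂₁) • H)) * O₂)
      = (Λ : ℂ) ^ (Δ₁ + Δ₂) *
          Matrix.trace (exp (-((τ - τ₂₁) • H)) * O₁ * exp (-(τ₂₁ • H)) * O₂) := by
  intro τ τ₂₁
  set s : ℂ := ((Real.log Λ : ℝ) : ℂ) with hs
  have hΛ0 : (Λ : ℂ) ≠ 0 := by exact_mod_cast hΛ.ne'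
  have hes : Complex.exp s = (Λ : ℂ) := by
    rw [hs, ← Complex.ofReal_exp, Real.exp_log hΛ]
  have hesneg : Complex.exp (-s) = (Λ : ℂ)⁻¹ := by rw [Complex.exp_neg, hes]
  have hcpow : ∀ Δ : ℂ, (Λ : ℂ) ^ Δ = Complex.exp (s * Δ) := fun Δ => by
    rw [Complex.cpow_def_of_ne_zero hΛ0, ← Complex.ofReal_log hΛ.le]
  set E := exp (s • L) with hE
  set F := exp ((-s) • L) with hF
  have hEF : E * F = 1 := by
    have hc : Commute (s • L) ((-s) • L) := ((Commute.refl L).smul_left s).smul_right (-s)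
    rw [hE, hF, ← Matrix.exp_add_of_commute _ _ hc]
    simp [← add_smul, exp_zero]
  have hFE : F * E = 1 := mul_eq_one_comm.mp hEF
  have hEO₁ : E * O₁ = (Λ : ℂ) ^ Δ₁ • (O₁ * E) := by
    rw [hcpow]; exact key_push L O₁ Δ₁ s h₁
  have hEO₂ : E * O₂ = (Λ : ℂ) ^ Δ₂ • (O₂ * E) := by
    rw [hcpow]; exact key_push L O₂ Δ₂ s h₂
  have hEH : E * H = (Λ : ℂ)⁻¹ • (H * E) := by
    have h' : L * H - H * L = (-1 : ℂ) • H := by rw [neg_one_smul]; exact h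
    have := key_push L H (-1) s h'
    rwa [mul_neg_one, hesneg] at this
  have hpush : ∀ c : ℂ, E * exp (-(((Λ : ℂ) * c) • H)) = exp (-(c • H)) * E := by
    intro c
    refine (intertwine_exp _ _ E ?_).symm
    have hc : ((Λ : ℂ) * c) * (Λ : ℂ)⁻¹ = c := by field_simp
    rw [neg_mul, mul_neg, smul_mul_assoc, mul_smul_comm, hEH, smul_smul, hc]
  set P₁ := exp (-(((Λ : ℂ) * (τ - τ₂₁)) • H)) with hP₁
  set P₂ := exp (-(((Λ : ℂ) * τ₂₁) • H)) with hP₂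
  set Q₁ := exp (-((τ - τ₂₁) • H)) with hQ₁
  set Q₂ := exp (-(τ₂₁ • H)) with hQ₂
  have key : E * (P₁ * O₁ * P₂ * O₂) * F
      = ((Λ : ℂ) ^ Δ₁ * (Λ : ℂ) ^ Δ₂) • (Q₁ * O₁ * Q₂ * O₂) := by
    calc E * (P₁ * O₁ * P₂ * O₂) * F
        = (E * P₁) * (O₁ * (P₂ * (O₂ * F))) := by simp only [mul_assoc]
      _ = (Q₁ * E) * (O₁ * (P₂ * (O₂ * F))) := by rw [hpush]
      _ = Q₁ * ((E * O₁) * (P₂ * (O₂ * F))) := by simp only [mul_assoc]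
      _ = Q₁ * (((Λ : ℂ) ^ Δ₁ • (O₁ * E)) * (P₂ * (O₂ * F))) := by rw [hEO₁]
      _ = (Λ : ℂ) ^ Δ₁ • (Q₁ * (O₁ * ((E * P₂) * (O₂ * F)))) := by
          simp only [smul_mul_assoc, mul_smul_comm, mul_assoc]
      _ = (Λ : ℂ) ^ Δ₁ • (Q₁ * (O₁ * ((Q₂ * E) * (O₂ * F)))) := by rw [hpush]
      _ = (Λ : ℂ) ^ Δ₁ • (Q₁ * (O₁ * (Q₂ * ((E * O₂) * F)))) := by simp only [mul_assoc]
      _ = (Λ : ℂ) ^ Δ₁ • (Q₁ * (O₁ * (Q₂ * (((Λ : ℂ) ^ Δ₂ • (O₂ * E)) * F)))) := by rw [hEO₂]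
      _ = ((Λ : ℂ) ^ Δ₁ * (Λ : ℂ) ^ Δ₂) • (Q₁ * (O₁ * (Q₂ * (O₂ * (E * F))))) := by
          simp only [smul_mul_assoc, mul_smul_comm, mul_assoc, smul_smul]
      _ = ((Λ : ℂ) ^ Δ₁ * (Λ : ℂ) ^ Δ₂) • (Q₁ * O₁ * Q₂ * O₂) := by
          rw [hEF, mul_one]; simp only [mul_assoc]
  calc Matrix.trace (P₁ * O₁ * P₂ * O₂)
      = Matrix.trace (F * (E * (P₁ * O₁ * P₂ * O₂))) := by rw [← mul_assoc, hFE, one_mul]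
    _ = Matrix.trace (E * (P₁ * O₁ * P₂ * O₂) * F) :=
        Matrix.trace_mul_comm F (E * (P₁ * O₁ * P₂ * O₂))
    _ = Matrix.trace (((Λ : ℂ) ^ Δ₁ * (Λ : ℂ) ^ Δ₂) • (Q₁ * O₁ * Q₂ * O₂)) := by rw [key]
    _ = (Λ : ℂ) ^ (Δ₁ + Δ₂) * Matrix.trace (Q₁ * O₁ * Q₂ * O₂) := by
        rw [Matrix.trace_smul, smul_eq_mul, ← Complex.cpow_add _ _ hΛ0]
end

section
/- Let L, H satisfy [L,H] = -H with H nilpotent, and let O₁, O₂ be conformal observables of dimensions Δ₁, Δ₂ ([L,Oᵢ] = ΔᵢOᵢ) with Δ₁ + Δ₂ a negative real number or not a non-negative integer. Then the two-point correlator Tr(e^{-(τ-τ₂₁)H} O₁ e^{-τ₂₁H} O₂) vanishes identically for all τ, τ₂₁. -/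
open NormedSpace

section Aux

variable {d : ℕ} (L : Matrix (Fin d) (Fin d) ℂ)

/-- Composable commutator lemma: if `L*A = A*L + a•A` and `L*B = B*L + b•B` then
`L*(A*B) = (A*B)*L + (a+b)•(A*B)`. -/
lemma aux_weight_mul {A B : Matrix (Fin d) (Fin d) ℂ} {a b : ℂ}
    (hA : L * A = A * L + a • A) (hB : L * B = B * L + b • B) :
    L * (A * B) = (A * B) * L + (a + b) • (A * B) := by
  calc L * (A * B) = (L * A) * B := by rw [mul_assoc]
    _ = A * (L * B) + a • (A * B) := by
        rw [hA, add_mul, smul_mul_assoc, mul_assoc]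
    _ = (A * B) * L + (a + b) • (A * B) := by
        rw [hB, mul_add, mul_smul_comm, add_smul, mul_assoc]
        abel

lemma aux_weight_pow {H : Matrix (Fin d) (Fin d) ℂ}
    (h : L * H = H * L + (-1 : ℂ) • H) (n : ℕ) :
    L * H ^ n = H ^ n * L + (-(n : ℂ)) • H ^ n := by
  induction n with
  | zero => simp
  | succ n ih =>
      have := aux_weight_mul L ih h
      rw [← pow_succ] at this
      rw [this]
      push_cast
      ring_nf

/-- The algebraic Ward identity: the trace of `H^n * O₁ * H^m * O₂` vanishes when the
total weight `Δ₁ + Δ₂ - n - m` is nonzero. -/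
lemma aux_trace_zero {H O₁ O₂ : Matrix (Fin d) (Fin d) ℂ} {Δ₁ Δ₂ : ℂ}
    (h : L * H - H * L = -H)
    (h₁ : L * O₁ - O₁ * L = Δ₁ • O₁) (h₂ : L * O₂ - O₂ * L = Δ₂ • O₂)
    (n m : ℕ) (hne : Δ₁ + Δ₂ - (n : ℂ) - (m : ℂ) ≠ 0) :
    Matrix.trace (H ^ n * O₁ * H ^ m * O₂) = 0 := by
  have hH' : L * H = H * L + (-1 : ℂ) • H := by
    have := sub_eq_iff_eq_add.mp h; rw [this]; simp; abel
  have hO₁ : L * O₁ = O₁ * L + Δ₁ • O₁ := by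
    have := sub_eq_iff_eq_add.mp h₁; rw [this, add_comm]
  have hO₂ : L * O₂ = O₂ * L + Δ₂ • O₂ := by
    have := sub_eq_iff_eq_add.mp h₂; rw [this, add_comm]
  have key : L * (H ^ n * O₁ * H ^ m * O₂)
      = (H ^ n * O₁ * H ^ m * O₂) * L
        + (Δ₁ + Δ₂ - (n : ℂ) - (m : ℂ)) • (H ^ n * O₁ * H ^ m * O₂) := by
    have w1 := aux_weight_mul L (aux_weight_pow L hH' n) hO₁
    have w2 := aux_weight_mul L w1 (aux_weight_pow L hH' m)
    have w3 := aux_weight_mul L w2 hO₂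
    rw [w3]
    congr 1
    ring_nf
  have htr : Matrix.trace (L * (H ^ n * O₁ * H ^ m * O₂))
      = Matrix.trace ((H ^ n * O₁ * H ^ m * O₂) * L) := Matrix.trace_mul_comm _ _
  rw [key, Matrix.trace_add, Matrix.trace_smul, add_eq_left, smul_eq_mul] at htr
  exact (mul_eq_zero.mp htr).resolve_left hne

/-- Finite expansion of the exponential of a nilpotent matrix. -/
lemma aux_exp_nilpotent {A : Matrix (Fin d) (Fin d) ℂ} {N : ℕ} (hA : A ^ N = 0) :
    exp A = ∑ n ∈ Finset.range N, ((n.factorial : ℂ))⁻¹ • A ^ n := by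
  rw [exp_eq_tsum ℂ]
  refine tsum_eq_sum ?_
  intro n hn
  rw [pow_eq_zero_of_le (le_of_not_gt fun hlt => hn (Finset.mem_range.mpr hlt)) hA,
    smul_zero]

end Aux

/-- If the total conformal dimension `Δ₁ + Δ₂` is a negative real number or not a
non-negative integer, the two-point correlator vanishes identically. -/
theorem stmt_16 {d : ℕ} (L H O₁ O₂ : Matrix (Fin d) (Fin d) ℂ) (Δ₁ Δ₂ : ℂ)
    (h : L * H - H * L = -H) (hH : IsNilpotent H)
    (h₁ : L * O₁ - O₁ * L = Δ₁ • O₁) (h₂ : L * O₂ - O₂ * L = Δ₂ • O₂)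
    (hΔ : (∃ r : ℝ, Δ₁ + Δ₂ = (r : ℂ) ∧ r < 0) ∨ ¬∃ m : ℕ, Δ₁ + Δ₂ = (m : ℂ)) :
    ∀ τ τ₂₁ : ℂ,
      Matrix.trace (exp (-((τ - τ₂₁) • H)) * O₁ * exp (-(τ₂₁ • H)) * O₂) = 0 := by
  -- The dimension hypothesis means Δ₁ + Δ₂ is never a non-negative integer.
  have hne : ∀ n m : ℕ, Δ₁ + Δ₂ - (n : ℂ) - (m : ℂ) ≠ 0 := by
    intro n m hc
    have hsum : Δ₁ + Δ₂ = ((n + m : ℕ) : ℂ) := by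
      push_cast
      linear_combination hc
    rcases hΔ with ⟨r, hr, hrneg⟩ | hnot
    · rw [hr] at hsum
      have : r = ((n + m : ℕ) : ℝ) := by exact_mod_cast hsum
      rw [this] at hrneg
      exact absurd hrneg (not_lt.mpr (by positivity))
    · exact hnot ⟨n + m, hsum⟩
  obtain ⟨N, hN⟩ := hH
  intro τ τ₂₁
  have hexp : ∀ z : ℂ, exp (-(z • H)) = ∑ n ∈ Finset.range N,
      ((-z) ^ n * ((n.factorial : ℂ))⁻¹) • H ^ n := by
    intro z
    have hz : (-(z • H)) = (-z) • H := by rw [neg_smul]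
    have hzN : ((-z) • H) ^ N = 0 := by
      rw [smul_pow, hN, smul_zero]
    rw [hz, aux_exp_nilpotent hzN]
    refine Finset.sum_congr rfl fun n _ => ?_
    rw [smul_pow, smul_smul, mul_comm]
  rw [hexp, hexp]
  simp only [Finset.sum_mul, Finset.mul_sum, smul_mul_assoc, mul_smul_comm,
    Matrix.trace_sum, Matrix.trace_smul]
  refine Finset.sum_eq_zero fun m _ => ?_
  rw [Finset.sum_eq_zero fun n _ => by
    rw [aux_trace_zero L h h₁ h₂ n m (hne n m), smul_zero], smul_zero]
end

section
/- Let H be a nilpotent endomorphism of finite-dimensional V with nilpotency index N, and let O₁, O₂ ∈ End(V) be conformal observables with [L,O₁]=Δ₁O₁, [L,O₂]=Δ₂O₂, where δ := Δ₁+Δ₂ is a non-negative integer. Then Tr(e^{-(τ-τ₂₁)H} O₁ e^{-τ₂₁H} O₂) = ∑_{k=0}^{min(δ,N-1)} ((τ₂₁-τ)^k (-τ₂₁)^{δ-k})/(k!(δ-k)!) · Tr(H^k O₁ H^{δ-k} O₂), where terms with δ-k ≥ N vanish. -/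
open NormedSpace

private lemma stmt19_step {d : ℕ} (L A B : Matrix (Fin d) (Fin d) ℂ) (a b : ℂ)
    (hA : L * A = A * L + a • A) (hB : L * B = B * L + b • B) :
    L * (A * B) = (A * B) * L + (a + b) • (A * B) := by
  rw [← mul_assoc, hA, add_mul, smul_mul_assoc, mul_assoc, hB]
  simp only [mul_add, mul_smul_comm, ← mul_assoc, add_smul]
  abel

private lemma stmt19_pow {d : ℕ} (L H : Matrix (Fin d) (Fin d) ℂ)
    (h : L * H - H * L = -H) : ∀ k : ℕ, L * H ^ k = H ^ k * L + (-(k:ℂ)) • H ^ k := by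
  have hH : L * H = H * L + (-1 : ℂ) • H := by
    have := sub_eq_iff_eq_add.mp h
    rw [this]; simp [add_comm]
  intro k
  induction k with
  | zero => simp
  | succ k ih =>
    rw [pow_succ, ← mul_assoc, ih, add_mul, smul_mul_assoc, mul_assoc, hH]
    simp only [mul_add, mul_smul_comm, ← mul_assoc, add_smul]
    push_cast
    module

private lemma stmt19_exp {d : ℕ} (H : Matrix (Fin d) (Fin d) ℂ) (N M : ℕ) (hN : H ^ N = 0)
    (hNM : N ≤ M) (c : ℂ) :
    exp (c • H) = ∑ n ∈ Finset.range M, (c ^ n * ((n.factorial : ℂ))⁻¹) • H ^ n := by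
  simp only [exp_eq_tsum ℂ]
  rw [tsum_eq_sum (s := Finset.range M) ?_]
  · refine Finset.sum_congr rfl fun n _ => ?_
    rw [smul_pow, smul_smul, mul_comm]
  · intro n hn
    have hn' : N ≤ n := le_trans hNM (le_of_not_gt (fun hc => hn (Finset.mem_range.mpr hc)))
    have : H ^ n = 0 := by
      rw [← Nat.add_sub_cancel' hn', pow_add, hN, zero_mul]
    rw [smul_pow, this, smul_zero, smul_zero]

/-- Explicit form of the two-point correlator of conformal observables with non-negative
integer total dimension `δ = Δ₁ + Δ₂`, for `H` nilpotent of index `N`: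
`Tr(e^{-(τ-τ₂₁)H} O₁ e^{-τ₂₁H} O₂)
  = ∑_{k=0}^{min(δ,N-1)} (τ₂₁-τ)^k (-τ₂₁)^{δ-k} / (k!(δ-k)!) · Tr(H^k O₁ H^{δ-k} O₂)`. -/
theorem stmt_19 {d : ℕ} (L H O₁ O₂ : Matrix (Fin d) (Fin d) ℂ) (Δ₁ Δ₂ : ℂ) (N : ℕ)
    (hN : H ^ N = 0) (hmin : ∀ m : ℕ, m < N → H ^ m ≠ 0)
    (h : L * H - H * L = -H)
    (h₁ : L * O₁ - O₁ * L = Δ₁ • O₁) (h₂ : L * O₂ - O₂ * L = Δ₂ • O₂)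
    (δ : ℕ) (hδ : (δ : ℂ) = Δ₁ + Δ₂) :
    ∀ τ τ₂₁ : ℂ,
      Matrix.trace (exp (-((τ - τ₂₁) • H)) * O₁ * exp (-(τ₂₁ • H)) * O₂)
      = ∑ k ∈ Finset.range (min δ (N - 1) + 1),
          ((τ₂₁ - τ) ^ k * (-τ₂₁) ^ (δ - k) / ((k.factorial : ℂ) * ((δ - k).factorial : ℂ))) *
            Matrix.trace (H ^ k * O₁ * H ^ (δ - k) * O₂) := by
  intro τ τ₂₁
  set M := max N (δ + 1) with hM
  have hNM : N ≤ M := le_max_left _ _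
  have hδM : δ + 1 ≤ M := le_max_right _ _
  have hHpow : ∀ n, N ≤ n → H ^ n = 0 := fun n hn => by
    rw [← Nat.add_sub_cancel' hn, pow_add, hN, zero_mul]
  -- Ward identity: the trace vanishes unless k + m = δ
  have hLH := stmt19_pow L H h
  have hO1 : L * O₁ = O₁ * L + Δ₁ • O₁ := by
    rw [sub_eq_iff_eq_add.mp h₁]; abel
  have hO2 : L * O₂ = O₂ * L + Δ₂ • O₂ := by
    rw [sub_eq_iff_eq_add.mp h₂]; abel
  have key : ∀ k m : ℕ, k + m ≠ δ → Matrix.trace (H ^ k * O₁ * H ^ m * O₂) = 0 := by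
    intro k m hkm
    have s1 := stmt19_step L (H ^ k) O₁ _ _ (hLH k) hO1
    have s2 := stmt19_step L (H ^ k * O₁) (H ^ m) _ _ s1 (hLH m)
    have s3 := stmt19_step L (H ^ k * O₁ * H ^ m) O₂ _ _ s2 hO2
    have ht := congrArg Matrix.trace s3
    rw [Matrix.trace_add, Matrix.trace_smul, Matrix.trace_mul_comm
      (H ^ k * O₁ * H ^ m * O₂) L, smul_eq_mul, left_eq_add] at ht
    rcases mul_eq_zero.mp ht with hc | htr
    · exfalso
      apply hkm
      have hcast : (δ : ℂ) = (k : ℂ) + (m : ℂ) := by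
        rw [hδ]; linear_combination hc
      exact_mod_cast hcast.symm
    · exact htr
  -- expand the exponentials
  have he1 : exp (-((τ - τ₂₁) • H))
      = ∑ n ∈ Finset.range M, ((τ₂₁ - τ) ^ n * ((n.factorial : ℂ))⁻¹) • H ^ n := by
    have : -((τ - τ₂₁) • H) = (τ₂₁ - τ) • H := by
      rw [← neg_smul]; ring_nf
    rw [this, stmt19_exp H N M hN hNM]
  have he2 : exp (-(τ₂₁ • H))
      = ∑ n ∈ Finset.range M, ((-τ₂₁) ^ n * ((n.factorial : ℂ))⁻¹) • H ^ n := by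
    have : -(τ₂₁ • H) = (-τ₂₁) • H := by rw [neg_smul]
    rw [this, stmt19_exp H N M hN hNM]
  rw [he1, he2]
  have Trm : ∀ k m : ℕ, ℂ := fun k m => Matrix.trace (H ^ k * O₁ * H ^ m * O₂)
  trans (∑ k ∈ Finset.range M, ∑ m ∈ Finset.range M,
      ((τ₂₁ - τ) ^ k * ((k.factorial : ℂ))⁻¹ * ((-τ₂₁) ^ m * ((m.factorial : ℂ))⁻¹)) *
        Matrix.trace (H ^ k * O₁ * H ^ m * O₂))
  · simp only [Finset.sum_mul, Finset.mul_sum, smul_mul_assoc, mul_smul_comm,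
      Matrix.trace_sum, Matrix.trace_smul, smul_eq_mul, smul_smul]
    rw [Finset.sum_comm]
    exact Finset.sum_congr rfl fun k _ => Finset.sum_congr rfl fun m _ => by ring
  -- collapse the inner sum using the Ward identity
  have hstep1 : ∀ k ∈ Finset.range M,
      (∑ m ∈ Finset.range M, ((τ₂₁ - τ) ^ k * ((k.factorial : ℂ))⁻¹ *
          ((-τ₂₁) ^ m * ((m.factorial : ℂ))⁻¹)) *
          Matrix.trace (H ^ k * O₁ * H ^ m * O₂))
      = (if k ≤ δ then ((τ₂₁ - τ) ^ k * ((k.factorial : ℂ))⁻¹ *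
          ((-τ₂₁) ^ (δ - k) * (((δ - k).factorial : ℂ))⁻¹)) *
          Matrix.trace (H ^ k * O₁ * H ^ (δ - k) * O₂) else 0) := by
    intro k _
    by_cases hk : k ≤ δ
    · rw [if_pos hk]
      refine Finset.sum_eq_single_of_mem (δ - k) ?_ ?_
      · exact Finset.mem_range.mpr (lt_of_lt_of_le (Nat.lt_succ_of_le (Nat.sub_le _ _)) hδM)
      · intro m _ hm
        rw [key k m (fun hc => hm (by omega)), mul_zero]
    · rw [if_neg hk]
      refine Finset.sum_eq_zero fun m _ => ?_
      rw [key k m (by omega), mul_zero]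
  rw [Finset.sum_congr rfl hstep1]
  -- drop the indicator by restricting the range to `δ + 1`
  trans (∑ k ∈ Finset.range (δ + 1),
      ((τ₂₁ - τ) ^ k * ((k.factorial : ℂ))⁻¹ *
        ((-τ₂₁) ^ (δ - k) * (((δ - k).factorial : ℂ))⁻¹)) *
        Matrix.trace (H ^ k * O₁ * H ^ (δ - k) * O₂))
  · rw [← Finset.sum_subset (Finset.range_subset_range.mpr hδM)
      (fun k _ hk => if_neg (fun hle => hk (Finset.mem_range.mpr (Nat.lt_succ_of_le hle))))]
    exact Finset.sum_congr rfl fun k hk => if_pos (Nat.lt_succ_iff.mp (Finset.mem_range.mp hk))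
  -- restrict further to `min δ (N-1) + 1`, the remaining terms vanish as `H ^ k = 0`
  rw [← Finset.sum_subset (Finset.range_subset_range.mpr (by omega : min δ (N - 1) + 1 ≤ δ + 1))
      (fun k hk hk' => ?_)]
  · refine Finset.sum_congr rfl fun k _ => ?_
    rw [div_eq_mul_inv, mul_inv]
    ring
  · have hkN : N ≤ k := by
      have h1 := Finset.mem_range.mp hk
      have h2 : ¬ k < min δ (N - 1) + 1 := fun hc => hk' (Finset.mem_range.mpr hc)
      omega
    rw [hHpow k hkN, zero_mul, zero_mul, zero_mul, Matrix.trace_zero, mul_zero]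
end
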